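/- Let x be an infinite word that is n-recurrent and not ultimately periodic. If p(n+1, x) = p(n, x) + 1, then x is (n+1)-recurrent. -/

import Mathlib

/-!
Suppose a factor `u` of length `n + 1` occurred only finitely often, say only before position `s`.
The tail `y` of `x` after `s` still contains every factor of length `n` (by `n`-recurrence) but
misses `u`, so `p(n + 1, y) ≤ p(n + 1, x) - 1 = p(n, x) = p(n, y) ≤ p(n + 1, y)`. Equality
`p(n + 1, y) = p(n, y)` means every factor of length `n` of `y` has a unique right extension, and
then the first repetition of a length-`n` window propagates to make `y`, hence `x`, ultimately
periodic.
-/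

open Filter

variable {A : Type*}

/-- The factor of the infinite word `x` of length `n` starting at position `j` (0-indexed). -/
def subwordAt (x : ℕ → A) (j n : ℕ) : List A := (List.range n).map fun i => x (j + i)

/-- `w` is a factor (subword) of the infinite word `x`. -/
def IsFactor (w : List A) (x : ℕ → A) : Prop := ∃ j, subwordAt x j w.length = w

/-- The subword complexity `p(n, x)`: the number of distinct length-`n` factors of `x`. -/
noncomputable def complexity (x : ℕ → A) (n : ℕ) : ℕ :=
  Set.ncard {w : List A | w.length = n ∧ IsFactor w x}

/-- `x` is ultimately periodic. -/
def UltimatelyPeriodic (x : ℕ → A) : Prop := ∃ N T, 0 < T ∧ ∀ i ≥ N, x (i + T) = x i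

/-- `w` is a left-special factor of `x`. -/
def LeftSpecial (w : List A) (x : ℕ → A) : Prop :=
  ∃ a b : A, a ≠ b ∧ IsFactor (a :: w) x ∧ IsFactor (b :: w) x

/-- `w` is a right-special factor of `x`. -/
def RightSpecial (w : List A) (x : ℕ → A) : Prop :=
  ∃ a b : A, a ≠ b ∧ IsFactor (w ++ [a]) x ∧ IsFactor (w ++ [b]) x

/-- `w` occurs infinitely many times in `x`. -/
def OccursInfinitely (w : List A) (x : ℕ → A) : Prop :=
  {j : ℕ | subwordAt x j w.length = w}.Infinite

/-- `x` is `n`-recurrent: every length-`n` factor occurs infinitely often. -/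
def NRecurrent (n : ℕ) (x : ℕ → A) : Prop :=
  ∀ j : ℕ, {i : ℕ | subwordAt x i n = subwordAt x j n}.Infinite

/-- The shift of `x` by `s` places. -/
def shiftWord (x : ℕ → A) (s : ℕ) : ℕ → A := fun i => x (s + i)

/-- `s_m`: the length of the `m`-th non-recurrent prefix of `x`. -/
noncomputable def srec (x : ℕ → A) (m : ℕ) : ℕ := sInf {s : ℕ | NRecurrent m (shiftWord x s)}

/-- `z_m`: the maximal `m`-recurrent tail of `x`, so that `x = a_m z_m`. -/
noncomputable def ztail (x : ℕ → A) (m : ℕ) : ℕ → A := shiftWord x (srec x m)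

/-- The repetition function `r(n, x)`: the least `m ≥ 1` such that
`x_{m+1} … x_{m+n} = x_{i+1} … x_{i+n}` for some `0 ≤ i < m`. -/
noncomputable def repFn (x : ℕ → A) (n : ℕ) : ℕ :=
  sInf {m : ℕ | 0 < m ∧ ∃ i < m, subwordAt x m n = subwordAt x i n}

/-- A right-special factor `w` is essential if it is a suffix of right-special
factors of every length `m ≥ |w|`. -/
def EssentialRightSpecial (w : List A) (x : ℕ → A) : Prop :=
  RightSpecial w x ∧
    ∀ m, w.length ≤ m → ∃ W : List A, W.length = m ∧ RightSpecial W x ∧ W.drop (m - w.length) = w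

/-- `C` is (the word read along) a cycle at `w` in the Rauzy graph `𝒢_n(y)`:
it has length `> n`, prefix `w`, suffix `w`, and is a factor of `y`. -/
def IsCycleAt (y : ℕ → A) (n : ℕ) (w C : List A) : Prop :=
  n < C.length ∧ C.take n = w ∧ C.drop (C.length - n) = w ∧ IsFactor C y

/-- The Rauzy graph `𝒢_n(y)` is of `∞`-shape with bi-special vertex `w`
and the two (simple) cycles `U` and `V`. -/
def InftyShape (y : ℕ → A) (n : ℕ) (w U V : List A) : Prop :=
  w.length = n ∧ LeftSpecial w y ∧ RightSpecial w y ∧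
  (∀ v : List A, v.length = n → IsFactor v y → (LeftSpecial v y ∨ RightSpecial v y) → v = w) ∧
  IsCycleAt y n w U ∧ IsCycleAt y n w V ∧ U ≠ V ∧
  (∀ j, 0 < j → j < U.length - n → (U.drop j).take n ≠ w) ∧
  (∀ j, 0 < j → j < V.length - n → (V.drop j).take n ≠ w) ∧
  (∀ v : List A, v.length = n → IsFactor v y →
    (∃ j ≤ U.length - n, (U.drop j).take n = v) ∨ (∃ j ≤ V.length - n, (V.drop j).take n = v))

/-- The word read along the concatenated path `U V^b U`, where `U`, `V` are
cycles at a vertex of length `n` (gluing overlaps of length `n`). -/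
def cyclePow (n : ℕ) (U V : List A) (b : ℕ) : List A :=
  U ++ (List.replicate b (V.drop n)).flatten ++ U.drop n

/-- The irrationality exponent of a real number, valued in `ℝ≥0∞`. -/
noncomputable def irrationalityExponent (ξ : ℝ) : ENNReal :=
  ⨆ (μ : ℝ) (_ : {q : ℕ | 0 < q ∧ ∃ p : ℤ, |ξ - p / q| < 1 / (q : ℝ) ^ μ}.Infinite),
    ENNReal.ofReal μ

open Set

@[simp]
lemma subwordAt_length (x : ℕ → A) (j m : ℕ) : (subwordAt x j m).length = m := by
  simp [subwordAt]

lemma subwordAt_take (x : ℕ → A) (j : ℕ) {k m : ℕ} (h : k ≤ m) :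
    (subwordAt x j m).take k = subwordAt x j k := by
  simp [subwordAt, ← List.map_take, List.take_range, Nat.min_eq_left h]

lemma subwordAt_succ_left (x : ℕ → A) (j m : ℕ) :
    subwordAt x j (m + 1) = x j :: subwordAt x (j + 1) m := by
  simp [subwordAt, List.range_succ_eq_map, Nat.add_comm, Nat.add_left_comm]

lemma subwordAt_shiftWord (x : ℕ → A) (s i m : ℕ) :
    subwordAt (shiftWord x s) i m = subwordAt x (s + i) m := by
  simp [subwordAt, shiftWord, Nat.add_assoc]

lemma setOf_isFactor_eq_range (x : ℕ → A) (m : ℕ) :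
    {w : List A | w.length = m ∧ IsFactor w x} = range (subwordAt x · m) := by
  ext w
  constructor
  · rintro ⟨rfl, j, hj⟩
    exact ⟨j, hj⟩
  · rintro ⟨j, rfl⟩
    exact ⟨subwordAt_length x j m, j, by rw [subwordAt_length]⟩

lemma complexity_eq_ncard_range (x : ℕ → A) (m : ℕ) :
    complexity x m = (range (subwordAt x · m)).ncard := by
  rw [complexity, setOf_isFactor_eq_range]

lemma finite_range_subwordAt [Finite A] (x : ℕ → A) (m : ℕ) :
    (range (subwordAt x · m)).Finite :=
  (List.finite_length_eq A m).subset <| by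
    rintro _ ⟨j, rfl⟩
    exact subwordAt_length x j m

lemma range_subwordAt_eq_image_take (x : ℕ → A) (m : ℕ) :
    range (subwordAt x · m) = List.take m '' range (subwordAt x · (m + 1)) := by
  rw [← range_comp]
  congr 1
  funext j
  exact (subwordAt_take x j m.le_succ).symm

lemma complexity_le_complexity_succ [Finite A] (x : ℕ → A) (m : ℕ) :
    complexity x m ≤ complexity x (m + 1) := by
  rw [complexity_eq_ncard_range, complexity_eq_ncard_range, range_subwordAt_eq_image_take]
  exact ncard_image_le (finite_range_subwordAt x (m + 1))

lemma subwordAt_succ_eq_of_complexity_succ_eq [Finite A] {x : ℕ → A} {m : ℕ}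
    (h : complexity x (m + 1) = complexity x m) {a b : ℕ}
    (hab : subwordAt x a m = subwordAt x b m) :
    subwordAt x a (m + 1) = subwordAt x b (m + 1) := by
  have hinj : InjOn (List.take m) (range (subwordAt x · (m + 1))) := by
    refine injOn_of_ncard_image_eq ?_ (finite_range_subwordAt x (m + 1))
    rw [← range_subwordAt_eq_image_take, ← complexity_eq_ncard_range,
      ← complexity_eq_ncard_range, h]
  refine hinj (mem_range_self a) (mem_range_self b) ?_
  simpa only [subwordAt_take x _ m.le_succ] using hab

lemma ultimatelyPeriodic_of_subwordAt_eq {x : ℕ → A} {m : ℕ}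
    (hext : ∀ a b, subwordAt x a m = subwordAt x b m →
      subwordAt x a (m + 1) = subwordAt x b (m + 1))
    {a b : ℕ} (hlt : a < b) (hab : subwordAt x a m = subwordAt x b m) :
    UltimatelyPeriodic x := by
  have hwindow : ∀ t, subwordAt x (a + t) m = subwordAt x (b + t) m := by
    intro t
    induction t with
    | zero => exact hab
    | succ t ih =>
      have hsucc := hext _ _ ih
      rw [subwordAt_succ_left, subwordAt_succ_left] at hsucc
      exact (List.cons_eq_cons.mp hsucc).2
  have hletter : ∀ t, x (a + t) = x (b + t) := fun t => by
    have hsucc := hext _ _ (hwindow t)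
    rw [subwordAt_succ_left, subwordAt_succ_left] at hsucc
    exact (List.cons_eq_cons.mp hsucc).1
  refine ⟨a, b - a, by omega, fun i hi => ?_⟩
  have := hletter (i - a)
  rw [show a + (i - a) = i by omega, show b + (i - a) = i + (b - a) by omega] at this
  exact this.symm

/-- The easy half of the Morse–Hedlund theorem. -/
theorem ultimatelyPeriodic_of_complexity_succ_eq [Finite A] {x : ℕ → A} {m : ℕ}
    (h : complexity x (m + 1) = complexity x m) : UltimatelyPeriodic x := by
  obtain ⟨a, b, hlt, hab⟩ := (finite_range_subwordAt x m).exists_lt_map_eq_of_forall_mem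
    (f := (subwordAt x · m)) mem_range_self
  exact ultimatelyPeriodic_of_subwordAt_eq
    (fun _ _ => subwordAt_succ_eq_of_complexity_succ_eq h) hlt hab

lemma UltimatelyPeriodic.of_shiftWord {x : ℕ → A} {s : ℕ}
    (h : UltimatelyPeriodic (shiftWord x s)) : UltimatelyPeriodic x := by
  obtain ⟨N, T, hT, hper⟩ := h
  refine ⟨s + N, T, hT, fun i hi => ?_⟩
  have := hper (i - s) (by omega)
  simp only [shiftWord] at this
  rwa [show s + (i - s + T) = i + T by omega, show s + (i - s) = i by omega] at this

lemma range_subwordAt_shiftWord_subset (x : ℕ → A) (s m : ℕ) :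
    range (subwordAt (shiftWord x s) · m) ⊆ range (subwordAt x · m) := by
  rintro _ ⟨i, rfl⟩
  exact ⟨s + i, (subwordAt_shiftWord x s i m).symm⟩

lemma range_subwordAt_shiftWord_of_nRecurrent {x : ℕ → A} {m : ℕ} (hrec : NRecurrent m x)
    (s : ℕ) : range (subwordAt (shiftWord x s) · m) = range (subwordAt x · m) := by
  refine (range_subwordAt_shiftWord_subset x s m).antisymm ?_
  rintro _ ⟨j, rfl⟩
  obtain ⟨i, hi, hsi⟩ := (hrec j).exists_gt s
  refine ⟨i - s, ?_⟩
  dsimp only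
  rw [subwordAt_shiftWord, Nat.add_sub_cancel' hsi.le]
  exact hi

lemma complexity_shiftWord_of_nRecurrent {x : ℕ → A} {m : ℕ} (hrec : NRecurrent m x) (s : ℕ) :
    complexity (shiftWord x s) m = complexity x m := by
  rw [complexity_eq_ncard_range, complexity_eq_ncard_range,
    range_subwordAt_shiftWord_of_nRecurrent hrec]

lemma complexity_shiftWord_lt [Finite A] {x : ℕ → A} {m j s : ℕ}
    (hocc : ∀ i, subwordAt x i m = subwordAt x j m → i < s) :
    complexity (shiftWord x s) m < complexity x m := by
  rw [complexity_eq_ncard_range, complexity_eq_ncard_range]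
  refine ncard_lt_ncard ?_ (finite_range_subwordAt x m)
  refine (range_subwordAt_shiftWord_subset x s m).ssubset_of_mem_notMem (mem_range_self j) ?_
  rintro ⟨i, hi⟩
  dsimp only at hi
  rw [subwordAt_shiftWord] at hi
  exact (hocc _ hi).not_ge (Nat.le_add_right s i)

theorem nRecurrent_succ_of_complexity_step {A : Type*} [Fintype A] (x : ℕ → A) (n : ℕ)
    (hrec : NRecurrent n x) (hx : ¬ UltimatelyPeriodic x)
    (hp : complexity x (n + 1) = complexity x n + 1) :
    NRecurrent (n + 1) x := by
  by_contra hnot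
  obtain ⟨j, hfin⟩ : ∃ j, {i | subwordAt x i (n + 1) = subwordAt x j (n + 1)}.Finite := by
    simpa [NRecurrent] using hnot
  obtain ⟨s, hs⟩ := hfin.bddAbove
  have hocc : ∀ i, subwordAt x i (n + 1) = subwordAt x j (n + 1) → i < s + 1 :=
    fun i hi => Nat.lt_succ_of_le (hs hi)
  set y := shiftWord x (s + 1)
  have hlt : complexity y (n + 1) < complexity x (n + 1) := complexity_shiftWord_lt hocc
  have heq : complexity y n = complexity x n := complexity_shiftWord_of_nRecurrent hrec _
  have hmono : complexity y n ≤ complexity y (n + 1) := complexity_le_complexity_succ y n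
  exact hx (ultimatelyPeriodic_of_complexity_succ_eq (x := y) (m := n) (by omega)).of_shiftWord
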